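/- Let s : ℝ → ℝ and v : ℝ → ℝ^d be differentiable with (1 + exp(s(t))/m)·s'(t) = v(t)ᵀ v'(t) for all t, and suppose s(0) = 0 and v(0) = 0. Then for all t, ‖v(t)‖₂² = 2·(s(t) + exp(s(t))/m − 1/m). -/

import Mathlib

/-!
With `Φ x = x + exp x / m`, an antiderivative of `1 + exp x / m`, the hypothesis says that
`‖v t‖ ^ 2 - 2 * Φ (s t)` has zero derivative, so it keeps its value `-2 / m` at `t = 0`.
-/

open Real

theorem norm_sq_sub_two_mul_comp_eq {E : Type*} [NormedAddCommGroup E] [InnerProductSpace ℝ E]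
    {Φ φ : ℝ → ℝ} (hΦ : ∀ x, HasDerivAt Φ (φ x) x) {s : ℝ → ℝ} {v : ℝ → E}
    (hs : Differentiable ℝ s) (hv : Differentiable ℝ v)
    (hode : ∀ t, φ (s t) * deriv s t = inner ℝ (v t) (deriv v t)) (t₀ t : ℝ) :
    ‖v t‖ ^ 2 - 2 * Φ (s t) = ‖v t₀‖ ^ 2 - 2 * Φ (s t₀) := by
  have hderiv : ∀ t, HasDerivAt (fun t => ‖v t‖ ^ 2 - 2 * Φ (s t)) 0 t := fun t => by
    refine ((hv t).hasDerivAt.norm_sq.sub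
      (((hΦ (s t)).comp t (hs t).hasDerivAt).const_mul 2)).congr_deriv ?_
    rw [← hode t]
    ring
  exact is_const_of_deriv_eq_zero (fun t => (hderiv t).differentiableAt)
    (fun t => (hderiv t).deriv) t t₀

theorem hasDerivAt_add_exp_div (m x : ℝ) :
    HasDerivAt (fun x => x + exp x / m) (1 + exp x / m) x :=
  (hasDerivAt_id x).add ((hasDerivAt_exp x).div_const m)

theorem sen_relationship_general (d : ℕ) (m : ℝ)
    (s : ℝ → ℝ) (v : ℝ → EuclideanSpace ℝ (Fin d))
    (hs : Differentiable ℝ s) (hv : Differentiable ℝ v)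
    (hode : ∀ t, (1 + Real.exp (s t) / m) * deriv s t
      = (inner ℝ (v t) (deriv v t) : ℝ))
    (hs0 : s 0 = 0) (hv0 : v 0 = 0) :
    ∀ t : ℝ, ‖v t‖ ^ 2 = 2 * (s t + Real.exp (s t) / m - 1 / m) := by
  intro t
  have hconserved := norm_sq_sub_two_mul_comp_eq (hasDerivAt_add_exp_div m) hs hv hode 0 t
  simp only [hs0, hv0, norm_zero, exp_zero] at hconserved
  linarith

theorem sen_relationship (d : ℕ) (m : ℝ) (hm : 0 < m)
    (s : ℝ → ℝ) (v : ℝ → EuclideanSpace ℝ (Fin d))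
    (hs : Differentiable ℝ s) (hv : Differentiable ℝ v)
    (hode : ∀ t, (1 + Real.exp (s t) / m) * deriv s t
      = (inner ℝ (v t) (deriv v t) : ℝ))
    (hs0 : s 0 = 0) (hv0 : v 0 = 0) :
    ∀ t : ℝ, ‖v t‖ ^ 2 = 2 * (s t + Real.exp (s t) / m - 1 / m) :=
  sen_relationship_general d m s v hs hv hode hs0 hv0
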